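/- Let F : ℝ^m → ℝ^n be twice continuously differentiable with F(θ*) = 0 at some point θ*, and suppose the Jacobian J_F has constant rank r on a neighborhood U of θ*, so that M = {θ ∈ U : F(θ) = 0} is (locally) an embedded submanifold. Then there exist an open neighborhood W ⊆ U of θ* and a constant c > 0 such that for every θ ∈ W, ‖F(θ)‖₂ ≥ c · dist(θ, M), where dist(θ, M) denotes the Euclidean distance from θ to the zero set M. -/

import Mathlib

/-!
Let `P` and `Q` be continuous projections onto the range and the kernel of `J = DF(θ₀)`. The map
`Φ θ = (P (F θ), Q θ)` has invertible derivative at `θ₀`, hence a local inverse `Ψ` that is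
Lipschitz near `Φ θ₀ = (0, Q θ₀)`. Since `rank (P ∘ DF θ)` is lower semicontinuous and bounded by
`rank DF θ = r`, the kernels of `P ∘ DF θ` and `DF θ` agree near `θ₀`; as `P ∘ F ∘ Ψ` is the first
coordinate, `F ∘ Ψ` is then locally constant in the second coordinate, so `Ψ (0, z)` lies in the
zero set. Therefore
`dist(θ, M) ≤ dist(Ψ (Φ θ), Ψ (0, (Φ θ).2)) ≤ Lip · ‖P (F θ)‖ ≤ Lip · ‖P‖ · ‖F θ‖`.
-/

open Module Metric Topology Asymptotics LinearMap

theorem LinearMap.ker_comp_eq_of_finrank_range_le {K V W X : Type*} [DivisionRing K]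
    [AddCommGroup V] [Module K V] [AddCommGroup W] [Module K W] [AddCommGroup X] [Module K X]
    [FiniteDimensional K V] (f : V →ₗ[K] W) (g : W →ₗ[K] X)
    (h : finrank K (range f) ≤ finrank K (range (g ∘ₗ f))) : ker (g ∘ₗ f) = ker f := by
  refine (Submodule.eq_of_le_of_finrank_le (ker_le_ker_comp f g) ?_).symm
  have := finrank_range_add_finrank_ker f
  have := finrank_range_add_finrank_ker (g ∘ₗ f)
  omega

theorem LinearMap.ker_comp_eq_of_rightInverse_on_range {K V W : Type*} [Semiring K]
    [AddCommMonoid V] [Module K V] [AddCommMonoid W] [Module K W] (f : V →ₗ[K] W)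
    (P : W →ₗ[K] range f) (hP : ∀ y : range f, P y = y) : ker (P ∘ₗ f) = ker f := by
  ext v
  have : P (f v) = ⟨f v, mem_range_self f v⟩ := hP ⟨f v, mem_range_self f v⟩
  simp [this]

theorem OpenPartialHomeomorph.isBigO_infDist {X A B : Type*} [PseudoMetricSpace X]
    [SeminormedAddCommGroup A] [PseudoMetricSpace B] (e : OpenPartialHomeomorph X (A × B))
    {x₀ : X} (hx₀ : x₀ ∈ e.source) (he₀ : (e x₀).1 = 0) {K : NNReal} {t : Set (A × B)}
    (hlip : LipschitzOnWith K e.symm t) (ht : t ∈ 𝓝 (e x₀)) {M : Set X}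
    (hM : ∀ᶠ b in 𝓝 (e x₀).2, e.symm (0, b) ∈ M) :
    (fun x => infDist x M) =O[𝓝 x₀] fun x => (e x).1 := by
  have he : ContinuousAt e x₀ := e.continuousAt hx₀
  have hsnd : Filter.Tendsto (fun x => (e x).2) (𝓝 x₀) (𝓝 (e x₀).2) :=
    (continuous_snd.tendsto _).comp he
  have hslice : Filter.Tendsto (fun x => ((0 : A), (e x).2)) (𝓝 x₀) (𝓝 (e x₀)) := by
    rw [← Prod.mk.eta (p := e x₀), he₀]
    exact tendsto_const_nhds.prodMk_nhds hsnd
  refine IsBigO.of_bound K ?_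
  filter_upwards [e.open_source.mem_nhds hx₀, he ht, hslice ht, hsnd hM]
    with x hxs hxt hx0t hxM
  calc ‖infDist x M‖ = infDist x M := Real.norm_of_nonneg infDist_nonneg
    _ ≤ dist x (e.symm (0, (e x).2)) := infDist_le_dist_of_mem hxM
    _ = dist (e.symm (e x)) (e.symm (0, (e x).2)) := by rw [e.left_inv hxs]
    _ ≤ K * dist (e x) (0, (e x).2) := hlip.dist_le_mul _ hxt _ hx0t
    _ = K * ‖(e x).1‖ := by simp [Prod.dist_eq]

section NontriviallyNormedField

variable {𝕜 E N : Type*} [NontriviallyNormedField 𝕜]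
  [NormedAddCommGroup E] [NormedSpace 𝕜 E] [NormedAddCommGroup N] [NormedSpace 𝕜 N]

theorem hasFDerivAt_comp_slice_eq_zero {A B : Type*} [NormedAddCommGroup A] [NormedSpace 𝕜 A]
    [NormedAddCommGroup B] [NormedSpace 𝕜 B] {f : E → N} {f' : E →L[𝕜] N} {P : N →L[𝕜] A}
    {Ψ : A × B → E} {Ψ' : A × B →L[𝕜] E} {a : A} {b : B}
    (hf : HasFDerivAt f f' (Ψ (a, b))) (hΨ : HasFDerivAt Ψ Ψ' (a, b))
    (hfst : (fun q => P (f (Ψ q))) =ᶠ[𝓝 (a, b)] Prod.fst)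
    (hker : ker (P ∘L f' : E →ₗ[𝕜] A) ≤ ker (f' : E →ₗ[𝕜] N)) :
    HasFDerivAt (fun b' => f (Ψ (a, b'))) (0 : B →L[𝕜] N) b := by
  have hcomp := hf.comp b (hΨ.comp b (hasFDerivAt_prodMk_right a b))
  have hPfst : P ∘L f' ∘L Ψ' = ContinuousLinearMap.fst 𝕜 A B :=
    ((P.hasFDerivAt.comp _ hf).comp _ hΨ).unique
      (hasFDerivAt_fst.congr_of_eventuallyEq hfst)
  refine hcomp.congr_fderiv (ContinuousLinearMap.ext fun w => hker ?_)
  simpa using congr($hPfst (0, w))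

variable [CompleteSpace 𝕜]

theorem eventually_ker_comp_eq_ker [FiniteDimensional 𝕜 E] {G X : Type*}
    [NormedAddCommGroup G] [NormedSpace 𝕜 G] [TopologicalSpace X] {T : X → E →L[𝕜] N} {x₀ : X}
    {r : ℕ} (hT : ContinuousAt T x₀) (P : N →L[𝕜] G)
    (hrank : ∀ᶠ x in 𝓝 x₀, finrank 𝕜 (range (T x : E →ₗ[𝕜] N)) = r)
    (h₀ : ker (P ∘L T x₀ : E →ₗ[𝕜] G) = ker (T x₀ : E →ₗ[𝕜] N)) :
    ∀ᶠ x in 𝓝 x₀, ker (P ∘L T x : E →ₗ[𝕜] G) = ker (T x : E →ₗ[𝕜] N) := by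
  have hrank₀ : finrank 𝕜 (range (P ∘L T x₀ : E →ₗ[𝕜] G)) = r := by
    have := finrank_range_add_finrank_ker (P ∘L T x₀ : E →ₗ[𝕜] G)
    have := finrank_range_add_finrank_ker (T x₀ : E →ₗ[𝕜] N)
    have := hrank.self_of_nhds
    rw [h₀] at *
    omega
  have hopen : IsOpen {L : E →L[𝕜] G | r ≤ finrank 𝕜 (range (L : E →ₗ[𝕜] G))} := by
    simpa only [LinearMap.rank, ← finrank_eq_rank, Nat.cast_le] using
      isOpen_setOfPred_nat_le_rank (𝕜 := 𝕜) (E := E) (F := G) r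
  have hlsc : ∀ᶠ x in 𝓝 x₀, r ≤ finrank 𝕜 (range (P ∘L T x : E →ₗ[𝕜] G)) :=
    hT.eventually ((ContinuousLinearMap.compL 𝕜 E N G P).continuous.continuousAt.eventually
      (hopen.mem_nhds hrank₀.ge))
  filter_upwards [hrank, hlsc] with x hx hlx
  exact ker_comp_eq_of_finrank_range_le (T x : E →ₗ[𝕜] N) (P : N →ₗ[𝕜] G) (hx ▸ hlx)

theorem ContinuousLinearMap.exists_equiv_prod_range_ker [FiniteDimensional 𝕜 E]
    (J : E →L[𝕜] N)
    (P : N →L[𝕜] range (J : E →ₗ[𝕜] N)) (hP : ∀ y : range (J : E →ₗ[𝕜] N), P y = y)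
    (Q : E →L[𝕜] ker (J : E →ₗ[𝕜] N)) (hQ : ∀ x : ker (J : E →ₗ[𝕜] N), Q x = x) :
    ∃ L : E ≃L[𝕜] range (J : E →ₗ[𝕜] N) × ker (J : E →ₗ[𝕜] N),
      (L : E →L[𝕜] range (J : E →ₗ[𝕜] N) × ker (J : E →ₗ[𝕜] N)) = (P ∘L J).prod Q := by
  have hinj : Function.Injective ((P ∘L J).prod Q) := by
    refine (injective_iff_map_eq_zero _).2 fun v hv => ?_
    have hJv : v ∈ ker (J : E →ₗ[𝕜] N) := by
      rw [← ker_comp_eq_of_rightInverse_on_range _ _ hP]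
      exact congr_arg Prod.fst hv
    simpa [hQ ⟨v, hJv⟩] using congr_arg Prod.snd hv
  have hdim :
      finrank 𝕜 E = finrank 𝕜 (range (J : E →ₗ[𝕜] N) × ker (J : E →ₗ[𝕜] N)) := by
    rw [finrank_prod, finrank_range_add_finrank_ker]
  exact ⟨(linearEquivOfInjective _ hinj hdim).toContinuousLinearEquiv, rfl⟩

end NontriviallyNormedField

section RCLike

variable {𝕜 E N : Type*} [RCLike 𝕜]
  [NormedAddCommGroup E] [NormedSpace 𝕜 E] [NormedAddCommGroup N] [NormedSpace 𝕜 N]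

theorem eventually_eq_of_eventually_hasFDerivAt_zero {f : E → N} {x : E}
    (h : ∀ᶠ y in 𝓝 x, HasFDerivAt f (0 : E →L[𝕜] N) y) : ∀ᶠ y in 𝓝 x, f y = f x := by
  let := NormedSpace.restrictScalars ℝ 𝕜 E
  obtain ⟨ε, hε, hball⟩ := Metric.eventually_nhds_iff_ball.1 h
  filter_upwards [ball_mem_nhds x hε] with y hy
  exact isOpen_ball.is_const_of_fderiv_eq_zero (convex_ball x ε).isPreconnected
    (fun z hz => (hball z hz).differentiableAt.differentiableWithinAt)
    (fun z hz => (hball z hz).fderiv) hy (mem_ball_self hε)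

theorem OpenPartialHomeomorph.eventually_apply_symm_slice_eq {A B : Type*}
    [NormedAddCommGroup A] [NormedSpace 𝕜 A] [NormedAddCommGroup B] [NormedSpace 𝕜 B]
    (e : OpenPartialHomeomorph E (A × B)) {F : E → N} {P : N →L[𝕜] A}
    (he : ∀ x, (e x).1 = P (F x)) {p : A × B} (hp : p ∈ e.target) (hF : Differentiable 𝕜 F)
    (hΨ : ∀ᶠ q in 𝓝 p, DifferentiableAt 𝕜 e.symm q)
    (hker : ∀ᶠ q in 𝓝 p,
      ker (P ∘L fderiv 𝕜 F (e.symm q) : E →ₗ[𝕜] A) ≤ ker (fderiv 𝕜 F (e.symm q) : E →ₗ[𝕜] N)) :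
    ∀ᶠ b in 𝓝 p.2, F (e.symm (p.1, b)) = F (e.symm p) := by
  obtain ⟨a, b⟩ := p
  have hslice : Filter.Tendsto (fun b' => (a, b')) (𝓝 b) (𝓝 (a, b)) :=
    (Continuous.prodMk_right a).tendsto b
  refine eventually_eq_of_eventually_hasFDerivAt_zero (𝕜 := 𝕜) ?_
  filter_upwards [hslice (e.open_target.mem_nhds hp), hslice hΨ, hslice hker]
    with b' hb' hΨb' hkerb'
  refine hasFDerivAt_comp_slice_eq_zero (hF _).hasFDerivAt hΨb'.hasFDerivAt ?_ hkerb'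
  filter_upwards [e.open_target.mem_nhds hb'] with q hq
  rw [← he, e.right_inv hq]

theorem isBigO_infDist_zeroSet_of_finrank_range_fderiv_eq [FiniteDimensional 𝕜 E]
    {F : E → N} {θ₀ : E} {U : Set E} {r : ℕ}
    (hF : ContDiff 𝕜 1 F) (hFθ₀ : F θ₀ = 0) (hU : U ∈ 𝓝 θ₀)
    (hrank : ∀ θ ∈ U, finrank 𝕜 (range (fderiv 𝕜 F θ : E →ₗ[𝕜] N)) = r) :
    (fun θ => infDist θ {θ ∈ U | F θ = 0}) =O[𝓝 θ₀] F := by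
  have := FiniteDimensional.complete 𝕜 E
  set J := fderiv 𝕜 F θ₀
  obtain ⟨P, hP⟩ := Submodule.ClosedComplemented.of_finiteDimensional (range (J : E →ₗ[𝕜] N))
  obtain ⟨Q, hQ⟩ := Submodule.ClosedComplemented.of_finiteDimensional (ker (J : E →ₗ[𝕜] N))
  obtain ⟨L, hL⟩ := J.exists_equiv_prod_range_ker P hP Q hQ
  set Φ : E → range (J : E →ₗ[𝕜] N) × ker (J : E →ₗ[𝕜] N) := fun θ => (P (F θ), Q θ)
  have hΦ : ContDiff 𝕜 1 Φ := (P.contDiff.comp hF).prodMk Q.contDiff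
  have hΦ' : HasFDerivAt Φ (L : E →L[𝕜] _) θ₀ := hL ▸
    (P.hasFDerivAt.comp θ₀ (hF.differentiable one_ne_zero θ₀).hasFDerivAt).prodMk Q.hasFDerivAt
  set e := hΦ.contDiffAt.toOpenPartialHomeomorph Φ hΦ' one_ne_zero
  have hΨ : ContDiffAt 𝕜 1 e.symm (Φ θ₀) := hΦ.contDiffAt.to_localInverse hΦ' one_ne_zero
  have hΨθ₀ : e.symm (Φ θ₀) = θ₀ := hΦ.contDiffAt.localInverse_apply_image hΦ' one_ne_zero
  have hΨ_tendsto : Filter.Tendsto e.symm (𝓝 (Φ θ₀)) (𝓝 θ₀) := by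
    simpa only [hΨθ₀] using hΨ.continuousAt.tendsto
  obtain ⟨K, t, ht, hlip⟩ := hΨ.exists_lipschitzOnWith
  have hker : ∀ᶠ θ in 𝓝 θ₀, ker (P ∘L fderiv 𝕜 F θ : E →ₗ[𝕜] range (J : E →ₗ[𝕜] N)) =
      ker (fderiv 𝕜 F θ : E →ₗ[𝕜] N) :=
    eventually_ker_comp_eq_ker (hF.continuous_fderiv one_ne_zero).continuousAt P
      (Filter.eventually_of_mem hU hrank) (ker_comp_eq_of_rightInverse_on_range _ _ hP)
  have hF_slice := e.eventually_apply_symm_slice_eq (fun _ => rfl)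
    (hΦ.contDiffAt.image_mem_toOpenPartialHomeomorph_target hΦ' one_ne_zero)
    (hF.differentiable one_ne_zero)
    ((hΨ.eventually (by simp)).mono fun q hq => hq.differentiableAt one_ne_zero)
    ((hΨ_tendsto.eventually hker).mono fun q hq => hq.le)
  have hU_slice : ∀ᶠ z in 𝓝 (Φ θ₀).2, e.symm ((Φ θ₀).1, z) ∈ U :=
    (hΨ_tendsto.comp ((Continuous.prodMk_right _).tendsto _)) hU
  have hΦθ₀ : (Φ θ₀).1 = 0 := by simp [Φ, hFθ₀]
  refine (e.isBigO_infDist (hΦ.contDiffAt.mem_toOpenPartialHomeomorph_source hΦ' one_ne_zero)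
    hΦθ₀ hlip ht ?_).trans (P.isBigO_comp F _)
  filter_upwards [hU_slice, hF_slice] with z hzU hzF
  rw [hΦθ₀] at hzU hzF
  exact ⟨hzU, by rw [hzF, hΨθ₀, hFθ₀]⟩

end RCLike

/-- **Residual lower bound by the distance to the zero set.**
If `F : ℝ^m → ℝ^n` is `C²` with `F(θ*) = 0` and its Jacobian has constant rank `r` on a
neighborhood `U` of `θ*`, then, with `M = {θ ∈ U : F(θ) = 0}`, there are an open
neighborhood `W ⊆ U` of `θ*` and a constant `c > 0` such that
`‖F(θ)‖ ≥ c · dist(θ, M)` for all `θ ∈ W`. -/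
theorem residual_bounds_distance_to_zero_set
    (m n : ℕ) (F : EuclideanSpace ℝ (Fin m) → EuclideanSpace ℝ (Fin n))
    (θstar : EuclideanSpace ℝ (Fin m)) (r : ℕ) (U : Set (EuclideanSpace ℝ (Fin m)))
    (hF : ContDiff ℝ 2 F)
    (hFzero : F θstar = 0)
    (hU_open : IsOpen U) (hθU : θstar ∈ U)
    (hrank : ∀ θ ∈ U, Module.finrank ℝ (LinearMap.range (fderiv ℝ F θ).toLinearMap) = r) :
    ∃ (W : Set (EuclideanSpace ℝ (Fin m))) (c : ℝ), IsOpen W ∧ W ⊆ U ∧ θstar ∈ W ∧ 0 < c ∧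
      ∀ θ ∈ W, ‖F θ‖ ≥ c * Metric.infDist θ {θ' ∈ U | F θ' = 0} := by
  obtain ⟨C, hC, hbound⟩ := (isBigO_infDist_zeroSet_of_finrank_range_fderiv_eq
    (hF.of_le one_le_two) hFzero (hU_open.mem_nhds hθU) hrank).exists_pos
  obtain ⟨W, hW, hW_open, hθW⟩ :=
    _root_.eventually_nhds_iff.1 (hbound.bound.and (hU_open.mem_nhds hθU))
  refine ⟨W, C⁻¹, hW_open, fun θ hθ => (hW θ hθ).2, hθW, inv_pos.2 hC, fun θ hθ => ?_⟩
  rw [ge_iff_le, inv_mul_le_iff₀ hC, ← Real.norm_of_nonneg infDist_nonneg]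
  exact (hW θ hθ).1
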